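/- If f : SG → ℝ is of bounded variation in the sense (A) and |f(x)| ≥ m > 0 for all x ∈ SG, then 1/f is also of bounded variation in sense (A); moreover Σ_{w∈{1,2,3}^n} R_{1/f}[u_w(SG)] ≤ 2V(f)/m² for all n, where V(f) is the total variation of f. -/

import Mathlib

open Set Metric MeasureTheory Filter ENNReal

noncomputable section

/-- The three vertices of the equilateral triangle generating the Sierpinski gasket. -/
def q : Fin 3 → ℝ × ℝ := ![(0,0), (1,0), (1/2, Real.sqrt 3 / 2)]

/-- The contraction maps of the IFS: `u i x = (x + q i)/2`. -/
def u (i : Fin 3) (x : ℝ × ℝ) : ℝ × ℝ := (2⁻¹ : ℝ) • (x + q i)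

/-- The address map of the IFS. -/
def addr (σ : ℕ → Fin 3) : ℝ × ℝ := ∑' n, ((2:ℝ)⁻¹ ^ (n+1)) • q (σ n)

/-- The Sierpinski gasket, as the set of points with an address. -/
def SG : Set (ℝ × ℝ) := Set.range addr

/-- Composition `u_{w₁} ∘ ⋯ ∘ u_{w_n}` along a word `w`. -/
def uw : List (Fin 3) → (ℝ × ℝ) → (ℝ × ℝ)
  | [] => id
  | i :: w => u i ∘ uw w

/-- The level-`n` cell of `SG` indexed by a word `w ∈ {1,2,3}^n`. -/
def cell {n : ℕ} (w : Fin n → Fin 3) : Set (ℝ × ℝ) := uw (List.ofFn w) '' SG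

/-- Oscillation (maximum range) `R_f[X]` of `f` over `X`, valued in `ℝ≥0∞`. -/
def osc (f : ℝ × ℝ → ℝ) (X : Set (ℝ × ℝ)) : ℝ≥0∞ :=
  ⨆ x ∈ X, ⨆ y ∈ X, ENNReal.ofReal |f x - f y|

/-- Total oscillation of order `n`: `R(n,f) = Σ_{w ∈ {1,2,3}^n} R_f[u_w(SG)]`. -/
def oscSum (n : ℕ) (f : ℝ × ℝ → ℝ) : ℝ≥0∞ :=
  ∑ w : Fin n → Fin 3, osc f (cell w)

/-- Total variation in the sense of definition (A). -/
def VA (f : ℝ × ℝ → ℝ) : ℝ≥0∞ := ⨆ n : ℕ, oscSum n f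

/-- Bounded variation in the sense of definition (A). -/
def BVA (f : ℝ × ℝ → ℝ) : Prop := VA f < ⊤

/-- `s = log 3 / log 2`, the dimension of `SG`. -/
def sdim : ℝ := Real.log 3 / Real.log 2

/-- Total oscillation of order `n` with exponent `s`. -/
def oscSumS (n : ℕ) (f : ℝ × ℝ → ℝ) : ℝ≥0∞ :=
  ∑ w : Fin n → Fin 3, (osc f (cell w)) ^ sdim

/-- Total variation in the sense of definition (A*). -/
def VAs (f : ℝ × ℝ → ℝ) : ℝ≥0∞ := ⨆ n : ℕ, oscSumS n f

/-- Bounded variation in the sense of definition (A*). -/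
def BVAs (f : ℝ × ℝ → ℝ) : Prop := VAs f < ⊤

/-- The graph `G_f = {(t, f t) : t ∈ SG} ⊂ ℝ³`. -/
def graphSG (f : ℝ × ℝ → ℝ) : Set ((ℝ × ℝ) × ℝ) := (fun t => (t, f t)) '' SG

/-- Smallest number of sets of diameter at most `δ` needed to cover `F`. -/
def coverNum {X : Type*} [MetricSpace X] (F : Set X) (δ : ℝ) : ℕ :=
  sInf {n : ℕ | ∃ t : Finset (Set X), t.card = n ∧ F ⊆ ⋃₀ ↑t ∧ ∀ U ∈ t, Metric.diam U ≤ δ}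

/-- Upper box (Minkowski) dimension. -/
def upperBoxDim {X : Type*} [MetricSpace X] (F : Set X) : ℝ :=
  Filter.limsup (fun δ : ℝ => Real.log (coverNum F δ) / (-Real.log δ)) (nhdsWithin 0 (Set.Ioi 0))

/-- Lower box dimension. -/
def lowerBoxDim {X : Type*} [MetricSpace X] (F : Set X) : ℝ :=
  Filter.liminf (fun δ : ℝ => Real.log (coverNum F δ) / (-Real.log δ)) (nhdsWithin 0 (Set.Ioi 0))

/-- The Euclidean norm on `ℝ × ℝ`. -/
def enorm2 (x : ℝ × ℝ) : ℝ := Real.sqrt (x.1 ^ 2 + x.2 ^ 2)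

/-! The reciprocal of a function bounded below by `m > 0` is `m⁻²`-Lipschitz, so every cell
oscillation of `1/f` is at most `m⁻²` times that of `f`; summing over the level-`n` cells bounds
`R(n, 1/f)` by `V(f)/m²`, which is finite when `f` is of bounded variation. -/

lemma norm_q_le_one (i : Fin 3) : ‖q i‖ ≤ 1 := by
  have h3 : Real.sqrt 3 ≤ 2 := Real.sqrt_le_iff.mpr ⟨by norm_num, by norm_num⟩
  fin_cases i <;> simp [q, Prod.norm_def, abs_of_nonneg]
  exact ⟨by norm_num, by linarith⟩

lemma summable_addr (σ : ℕ → Fin 3) : Summable fun n => ((2:ℝ)⁻¹ ^ (n+1)) • q (σ n) := by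
  refine Summable.of_norm_bounded (summable_geometric_two.mul_left 2⁻¹) fun n => ?_
  rw [norm_smul, norm_pow, norm_inv, Real.norm_two, pow_succ', one_div, inv_pow]
  exact mul_le_of_le_one_right (by positivity) (norm_q_le_one _)

lemma addr_cons (i : Fin 3) (σ : ℕ → Fin 3) :
    addr (fun | 0 => i | n + 1 => σ n) = u i (addr σ) := by
  have hshift : ∀ n,
      ((2:ℝ)⁻¹ ^ (n + 1 + 1)) • q (σ n) = (2:ℝ)⁻¹ • (((2:ℝ)⁻¹ ^ (n + 1)) • q (σ n)) :=
    fun n => by rw [smul_smul, ← pow_succ']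
  rw [addr, (summable_addr _).tsum_eq_zero_add]
  simp only [hshift, (summable_addr σ).tsum_const_smul, u, addr, smul_add]
  rw [add_comm, zero_add, pow_one]

lemma mapsTo_u_SG (i : Fin 3) : MapsTo (u i) SG SG := by
  rintro _ ⟨σ, rfl⟩
  exact ⟨_, addr_cons i σ⟩

lemma mapsTo_uw_SG : ∀ w : List (Fin 3), MapsTo (uw w) SG SG
  | [] => mapsTo_id SG
  | i :: w => (mapsTo_u_SG i).comp (mapsTo_uw_SG w)

lemma cell_subset_SG {n : ℕ} (w : Fin n → Fin 3) : cell w ⊆ SG :=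
  (mapsTo_uw_SG _).image_subset

lemma abs_inv_sub_inv_le {a b m : ℝ} (hm : 0 < m) (ha : m ≤ |a|) (hb : m ≤ |b|) :
    |a⁻¹ - b⁻¹| ≤ |a - b| / m ^ 2 := by
  have ha0 : a ≠ 0 := abs_pos.mp (hm.trans_le ha)
  have hb0 : b ≠ 0 := abs_pos.mp (hm.trans_le hb)
  rw [inv_sub_inv ha0 hb0, abs_div, abs_mul, abs_sub_comm, sq]
  exact div_le_div_of_nonneg_left (abs_nonneg _) (by positivity)
    (mul_le_mul ha hb hm.le (abs_nonneg a))

lemma ofReal_abs_sub_le_osc {f : ℝ × ℝ → ℝ} {X : Set (ℝ × ℝ)} {x y : ℝ × ℝ}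
    (hx : x ∈ X) (hy : y ∈ X) : ENNReal.ofReal |f x - f y| ≤ osc f X :=
  le_iSup₂_of_le x hx (le_iSup₂_of_le y hy le_rfl)

lemma osc_le_osc_mul {f g : ℝ × ℝ → ℝ} {X : Set (ℝ × ℝ)} {C : ℝ≥0∞}
    (h : ∀ x ∈ X, ∀ y ∈ X, ENNReal.ofReal |g x - g y| ≤ ENNReal.ofReal |f x - f y| * C) :
    osc g X ≤ osc f X * C :=
  iSup₂_le fun x hx => iSup₂_le fun y hy =>
    (h x hx y hy).trans (mul_le_mul_left (ofReal_abs_sub_le_osc hx hy) C)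

lemma oscSum_le_oscSum_mul {f g : ℝ × ℝ → ℝ} {C : ℝ≥0∞} (n : ℕ)
    (h : ∀ w : Fin n → Fin 3, osc g (cell w) ≤ osc f (cell w) * C) :
    oscSum n g ≤ oscSum n f * C := by
  rw [oscSum, oscSum, Finset.sum_mul]
  exact Finset.sum_le_sum fun w _ => h w

lemma oscSum_le_VA (n : ℕ) (f : ℝ × ℝ → ℝ) : oscSum n f ≤ VA f :=
  le_iSup (fun k => oscSum k f) n

lemma osc_inv_le {f : ℝ × ℝ → ℝ} {m : ℝ} (hm : 0 < m) {X : Set (ℝ × ℝ)}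
    (hlb : ∀ x ∈ X, m ≤ |f x|) :
    osc (fun x => (f x)⁻¹) X ≤ osc f X * (ENNReal.ofReal (m ^ 2))⁻¹ :=
  osc_le_osc_mul fun x hx y hy => by
    rw [← div_eq_mul_inv, ← ENNReal.ofReal_div_of_pos (by positivity)]
    exact ENNReal.ofReal_le_ofReal (abs_inv_sub_inv_le hm (hlb x hx) (hlb y hy))

/-- if `f` is BV in sense (A) and `|f| ≥ m > 0` on `SG`, then `1/f` is BV in
sense (A), with `Σ_w R_{1/f}[u_w(SG)] ≤ 2V(f)/m²` for all `n`. -/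
theorem stmt17 (f : ℝ × ℝ → ℝ) (m : ℝ) (hm : 0 < m)
    (hlb : ∀ x ∈ SG, m ≤ |f x|) (hbv : BVA f) :
    BVA (fun x => (f x)⁻¹) ∧
    ∀ n : ℕ, oscSum n (fun x => (f x)⁻¹) ≤ 2 * VA f / ENNReal.ofReal (m ^ 2) := by
  have hbound : ∀ n, oscSum n (fun x => (f x)⁻¹) ≤ 2 * VA f / ENNReal.ofReal (m ^ 2) := by
    intro n
    calc oscSum n (fun x => (f x)⁻¹)
        ≤ oscSum n f * (ENNReal.ofReal (m ^ 2))⁻¹ := oscSum_le_oscSum_mul n fun w =>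
          osc_inv_le hm fun x hx => hlb x (cell_subset_SG w hx)
      _ ≤ 2 * VA f * (ENNReal.ofReal (m ^ 2))⁻¹ := by
          gcongr
          exact (oscSum_le_VA n f).trans (le_mul_of_one_le_left' one_le_two)
  refine ⟨lt_of_le_of_lt (iSup_le hbound) ?_, hbound⟩
  refine ENNReal.div_lt_top (ENNReal.mul_ne_top ENNReal.ofNat_ne_top hbv.ne) ?_
  simpa using hm.ne'
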